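/- Let C = ⟨A₁,…,A_{2k}⟩ be a cyclic code over R = F_p[u,v]/⟨u^k, v², uv−vu⟩ and 1 ≤ i ≤ k. Any element of C of the form v·(u^{i−1}p₀(x) + u^i p₁(x) + ⋯ + u^{k−1}p_{k−i}(x)) with p_j(x) ∈ F_p[x] can be written as q₀(x)A_{k+i} + q₁(x)A_{k+i+1} + ⋯ + q_{k−i}(x)A_{2k} for some q₀,…,q_{k−i} ∈ F_p[x]. -/

import Mathlib

set_option synthInstance.maxHeartbeats 1000000

open Polynomial

/-- The ring `F_p[u,v]/⟨u^k, v²⟩` (the variables commute, so `uv - vu = 0` is automatic). -/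
abbrev Rbase (p k : ℕ) : Type :=
  MvPolynomial (Fin 2) (ZMod p) ⧸
    Ideal.span {(MvPolynomial.X 0 : MvPolynomial (Fin 2) (ZMod p)) ^ k, MvPolynomial.X 1 ^ 2}

/-- The image of `u`. -/
noncomputable def uu (p k : ℕ) : Rbase p k := Ideal.Quotient.mk _ (MvPolynomial.X 0)

/-- The image of `v`. -/
noncomputable def vv (p k : ℕ) : Rbase p k := Ideal.Quotient.mk _ (MvPolynomial.X 1)

/-- `R_n = (F_p[u,v]/⟨u^k,v²⟩)[x]/⟨xⁿ−1⟩`, the ambient ring of cyclic codes of length `n`. -/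
abbrev Rn (p k n : ℕ) : Type :=
  Polynomial (Rbase p k) ⧸
    Ideal.span {(Polynomial.X : Polynomial (Rbase p k)) ^ n - 1}

instance instIsTwoSidedRn (p k n : ℕ) :
    (Ideal.span {(Polynomial.X : Polynomial (Rbase p k)) ^ n - 1}).IsTwoSided :=
  ⟨fun b ha => by convert Ideal.mul_mem_left _ b ha using 1; exact @mul_comm (Polynomial (Rbase p k)) _ _ _⟩

noncomputable def uR (p k n : ℕ) : Rn p k n := Ideal.Quotient.mk _ (Polynomial.C (uu p k))
noncomputable def vR (p k n : ℕ) : Rn p k n := Ideal.Quotient.mk _ (Polynomial.C (vv p k))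
noncomputable def xR (p k n : ℕ) : Rn p k n := Ideal.Quotient.mk _ Polynomial.X

/-- The canonical map `F_p[x] → R_n` (coefficientwise inclusion followed by the quotient map). -/
noncomputable def theta (p k n : ℕ) : Polynomial (ZMod p) →+* Rn p k n :=
  (Ideal.Quotient.mk _).comp (Polynomial.mapRingHom (algebraMap (ZMod p) (Rbase p k)))

/-- The set of `f ∈ F_p[x]` representing elements of
`C_i = Tor Res … Res (C) = {f : u^{i-1}·f ∈ C mod ⟨u^i, v⟩}`. -/
def resTorSet (p k n : ℕ) (C : Ideal (Rn p k n)) (i : ℕ) : Set (Polynomial (ZMod p)) :=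
  {f | uR p k n ^ (i - 1) * theta p k n f ∈
        C ⊔ Ideal.span {uR p k n ^ i, vR p k n}}

/-- The set of `f ∈ F_p[x]` representing elements of
`C_{k+i} = Tor Res … Res Tor (C) = {f : u^{i-1}·v·f ∈ C mod ⟨u^i v⟩}`. -/
def torTorSet (p k n : ℕ) (C : Ideal (Rn p k n)) (i : ℕ) : Set (Polynomial (ZMod p)) :=
  {f | uR p k n ^ (i - 1) * vR p k n * theta p k n f ∈
        C ⊔ Ideal.span {uR p k n ^ i * vR p k n}}

/-- `g` is the (monic, minimal-degree) generator of the ideal of `F_p[x]/⟨xⁿ−1⟩` whose set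
of polynomial representatives is `S`. -/
def IsMinGen (p n : ℕ) (S : Set (Polynomial (ZMod p))) (g : Polynomial (ZMod p)) : Prop :=
  g.Monic ∧
  S = {f | ∃ a b : Polynomial (ZMod p), f = g * a + (Polynomial.X ^ n - 1) * b} ∧
  ∀ f ∈ S, f ≠ 0 → g.degree ≤ f.degree

/-- The canonical generator
`A_i = u^{i-1}g_i + u^i g_{ii} + ⋯ + u^{k-1}g_{i(k-1)} + v(g_{ik} + ⋯ + u^{k-1}g_{i(2k-1)})`
as a polynomial over `F_p[u,v]/⟨u^k,v²⟩`, for `1 ≤ i ≤ k`. -/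
noncomputable def Apoly (p k : ℕ) (g : ℕ → Polynomial (ZMod p))
    (gg : ℕ → ℕ → Polynomial (ZMod p)) (i : ℕ) : Polynomial (Rbase p k) :=
  Polynomial.C (uu p k ^ (i - 1)) * (g i).map (algebraMap (ZMod p) (Rbase p k))
    + ∑ j ∈ Finset.Icc i (k - 1),
        Polynomial.C (uu p k ^ j) * (gg i j).map (algebraMap (ZMod p) (Rbase p k))
    + Polynomial.C (vv p k) *
        ∑ j ∈ Finset.Icc k (2 * k - 1),
          Polynomial.C (uu p k ^ (j - k)) * (gg i j).map (algebraMap (ZMod p) (Rbase p k))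

/-- The canonical generator
`A_{k+i} = v(u^{i-1}g_{k+i} + u^i g_{(k+i)(k+i)} + ⋯ + u^{k-1}g_{(k+i)(2k-1)})`
as a polynomial over `F_p[u,v]/⟨u^k,v²⟩`, for `1 ≤ i ≤ k`. -/
noncomputable def AVpoly (p k : ℕ) (g : ℕ → Polynomial (ZMod p))
    (gg : ℕ → ℕ → Polynomial (ZMod p)) (i : ℕ) : Polynomial (Rbase p k) :=
  Polynomial.C (vv p k) *
    (Polynomial.C (uu p k ^ (i - 1)) * (g (k + i)).map (algebraMap (ZMod p) (Rbase p k))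
      + ∑ j ∈ Finset.Icc (k + i) (2 * k - 1),
          Polynomial.C (uu p k ^ (j - k)) * (gg (k + i) j).map (algebraMap (ZMod p) (Rbase p k)))

/-- `A_i` as an element of `R_n`. -/
noncomputable def Aelt (p k n : ℕ) (g : ℕ → Polynomial (ZMod p))
    (gg : ℕ → ℕ → Polynomial (ZMod p)) (i : ℕ) : Rn p k n :=
  Ideal.Quotient.mk _ (Apoly p k g gg i)

/-- `A_{k+i}` as an element of `R_n`. -/
noncomputable def AVelt (p k n : ℕ) (g : ℕ → Polynomial (ZMod p))
    (gg : ℕ → ℕ → Polynomial (ZMod p)) (i : ℕ) : Rn p k n :=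
  Ideal.Quotient.mk _ (AVpoly p k g gg i)

/-- The minimum Hamming weight of a nonzero codeword of `C ⊆ R_n` (weights are computed
on the unique representative of degree `< n`). -/
noncomputable def dHam (p k n : ℕ) (C : Ideal (Rn p k n)) : ℕ :=
  sInf {m | ∃ f : Polynomial (Rbase p k), f ≠ 0 ∧ f.degree < (n : ℕ) ∧
    Ideal.Quotient.mk (Ideal.span {(Polynomial.X : Polynomial (Rbase p k)) ^ n - 1}) f ∈ C ∧
    m = f.support.card}

/-- The minimum Hamming weight of a nonzero codeword of a cyclic code over `F_p` given by a
set `S` of polynomial representatives (closed under adding multiples of `xⁿ−1`). -/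
noncomputable def dHamF (p n : ℕ) (S : Set (Polynomial (ZMod p))) : ℕ :=
  sInf {m | ∃ f : Polynomial (ZMod p), f ≠ 0 ∧ f.degree < (n : ℕ) ∧ f ∈ S ∧
    m = f.support.card}

/-!
Downward induction on `i`. If `v (u^{i-1} p₀ + u^i p₁ + ⋯)` lies in `C`, then so does
`u^{i-1} v p₀` modulo `u^i v`, i.e. `p₀ ∈ C_{k+i}`, whence `p₀ ≡ g_{k+i} q₀` modulo `xⁿ - 1`.
Subtracting `q₀ A_{k+i}` then kills the `u^{i-1}` term and leaves an element of `C` of the same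
shape starting at `u^i`, to which the induction hypothesis applies.
-/

section VSum

variable {R S : Type*} [CommRing R] [CommRing S]

def vuSum (u v : S) (e m : ℕ) (c : ℕ → S) : S :=
  v * ∑ j ∈ Finset.range m, u ^ (e + j) * c j

lemma vuSum_succ (u v : S) (e m : ℕ) (c : ℕ → S) :
    vuSum u v e (m + 1) c = u ^ e * v * c 0 + vuSum u v (e + 1) m fun j => c (j + 1) := by
  simp only [vuSum, Finset.sum_range_succ', add_zero, mul_add, Finset.mul_sum]
  rw [add_comm]
  congr 1
  · ring
  · exact Finset.sum_congr rfl fun j _ => by rw [← add_assoc, add_right_comm]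

lemma vuSum_sub_mul (u v a : S) (e m : ℕ) (c d : ℕ → S) :
    vuSum u v e m c - a * vuSum u v e m d = vuSum u v e m fun j => c j - a * d j := by
  simp only [vuSum, mul_sub, Finset.mul_sum, Finset.sum_sub_distrib]
  congr 1
  exact Finset.sum_congr rfl fun _ _ => by ring

lemma vuSum_succ_sub_mem_span (u v : S) (e m : ℕ) (c : ℕ → S) :
    vuSum u v e (m + 1) c - u ^ e * v * c 0 ∈ Ideal.span {u ^ (e + 1) * v} := by
  rw [vuSum_succ, add_sub_cancel_left, vuSum, Finset.mul_sum]
  refine Ideal.sum_mem _ fun j _ => Ideal.mem_span_singleton.mpr ⟨u ^ j * c (j + 1), ?_⟩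
  ring

/-- Abstract form of the reduction: `A e` plays the role of `A_{k+e+1}`, and `hdiv` says that
`θ (γ e 0)` generates the torsion code at level `e`. -/
theorem exists_eq_sum_mul_of_vuSum_mem (θ : R →+* S) (C : Ideal S) (u v : S) (K : ℕ)
    (γ : ℕ → ℕ → R) (A : ℕ → S)
    (hA : ∀ e < K, A e = vuSum u v e (K - e) fun j => θ (γ e j))
    (hAC : ∀ e < K, A e ∈ C)
    (hdiv : ∀ e < K, ∀ y, u ^ e * v * θ y ∈ C ⊔ Ideal.span {u ^ (e + 1) * v} →
      ∃ a, θ y = θ (γ e 0) * θ a)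
    {e m : ℕ} (hem : e + m = K) {P : ℕ → R} (hP : vuSum u v e m (fun j => θ (P j)) ∈ C) :
    ∃ q : ℕ → R, vuSum u v e m (fun j => θ (P j)) = ∑ j ∈ Finset.range m, θ (q j) * A (e + j) := by
  induction m generalizing e P with
  | zero => exact ⟨0, by simp [vuSum]⟩
  | succ m ih =>
    have he : e < K := by omega
    obtain ⟨a, ha⟩ := hdiv e he (P 0) <| by
      simpa only [sub_sub_cancel] using sub_mem (Ideal.mem_sup_left hP)
        (Ideal.mem_sup_right (vuSum_succ_sub_mem_span u v e m fun j => θ (P j)))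
    have hreduce : vuSum u v e (m + 1) (fun j => θ (P j)) - θ a * A e
        = vuSum u v (e + 1) m fun j => θ (P (j + 1) - a * γ e (j + 1)) := by
      rw [hA e he, show K - e = m + 1 by omega, vuSum_sub_mul, vuSum_succ, ha]
      simp only [map_sub, map_mul]
      ring
    obtain ⟨q, hq⟩ := ih (e := e + 1) (by omega) (hreduce ▸ sub_mem hP (C.mul_mem_left _ (hAC e he)))
    refine ⟨fun | 0 => a | j + 1 => q j, ?_⟩
    rw [Finset.sum_range_succ', add_zero]
    have hshift : ∑ j ∈ Finset.range m, θ (q j) * A (e + (j + 1))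
        = ∑ j ∈ Finset.range m, θ (q j) * A (e + 1 + j) :=
      Finset.sum_congr rfl fun j _ => by rw [← add_assoc, add_right_comm]
    rw [hshift, ← hq, ← hreduce]
    ring

end VSum

/-- `Ideal.Quotient.commRing` does not elaborate against `Rn` in reasonable time, so the
commutative structure is built on top of the ring structure `Rn` already carries. -/
noncomputable abbrev Rn.commRing (p k n : ℕ) : CommRing (Rn p k n) :=
  { (inferInstance : Ring (Rn p k n)) with
    mul_comm := fun a b => by
      obtain ⟨a, rfl⟩ := Ideal.Quotient.mk_surjective a
      obtain ⟨b, rfl⟩ := Ideal.Quotient.mk_surjective b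
      rw [← map_mul, ← map_mul, mul_comm a b] }

lemma theta_X_pow_sub_one (p k n : ℕ) : theta p k n (X ^ n - 1) = 0 := by
  have : theta p k n (X ^ n - 1) = Ideal.Quotient.mk _ ((X : (Rbase p k)[X]) ^ n - 1) := by
    simp [theta, Polynomial.map_sub, Polynomial.map_pow]
  rw [this, Ideal.Quotient.eq_zero_iff_mem]
  exact Ideal.subset_span rfl

lemma IsMinGen.exists_theta_eq_mul {p n : ℕ} {S : Set (ZMod p)[X]} {G y : (ZMod p)[X]}
    (hG : IsMinGen p n S G) (hy : y ∈ S) (k : ℕ) :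
    ∃ a, theta p k n y = theta p k n G * theta p k n a := by
  rw [hG.2.1] at hy
  obtain ⟨a, b, rfl⟩ := hy
  exact ⟨a, by rw [map_add, map_mul, map_mul, theta_X_pow_sub_one, zero_mul, add_zero]⟩

section

attribute [local instance] Rn.commRing

def avCoeff {F : Type*} (k : ℕ) (g : ℕ → F) (gg : ℕ → ℕ → F) (i : ℕ) : ℕ → F
  | 0 => g (k + i)
  | j + 1 => gg (k + i) (k + i + j)

lemma AVelt_succ_eq_vuSum (p k n : ℕ) (g : ℕ → (ZMod p)[X]) (gg : ℕ → ℕ → (ZMod p)[X])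
    {e : ℕ} (he : e < k) :
    AVelt p k n g gg (e + 1)
      = vuSum (uR p k n) (vR p k n) e (k - e) fun j => theta p k n (avCoeff k g gg (e + 1) j) := by
  obtain ⟨m, hm⟩ : ∃ m, k - e = m + 1 := ⟨k - e - 1, by omega⟩
  have hIcc : Finset.Icc (k + (e + 1)) (2 * k - 1) = Finset.Ico (k + (e + 1)) (k + (e + 1) + m) := by
    ext; simp only [Finset.mem_Icc, Finset.mem_Ico]; omega
  rw [hm, vuSum_succ, vuSum]
  simp only [AVelt, AVpoly, hIcc, Finset.sum_Ico_eq_sum_range, Nat.add_sub_cancel_left]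
  simp only [vR, uR, theta, RingHom.comp_apply, coe_mapRingHom, map_mul, map_add, map_sum, map_pow,
    Nat.add_sub_cancel, avCoeff, add_assoc, Nat.add_sub_cancel_left]
  ring

end

theorem stmt19 (p k n : ℕ)
    (C : Ideal (Rn p k n)) (g : ℕ → Polynomial (ZMod p))
    (gg : ℕ → ℕ → Polynomial (ZMod p))
    (htor : ∀ i ∈ Finset.Icc 1 k, IsMinGen p n (torTorSet p k n C i) (g (k + i)))
    (hAV : ∀ i ∈ Finset.Icc 1 k, AVelt p k n g gg i ∈ C)
    (i : ℕ) (hi1 : 1 ≤ i) (hik : i ≤ k)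
    (P : ℕ → Polynomial (ZMod p))
    (hE : vR p k n * ∑ j ∈ Finset.range (k - i + 1),
        uR p k n ^ (i - 1 + j) * theta p k n (P j) ∈ C) :
    ∃ q : ℕ → Polynomial (ZMod p),
      vR p k n * ∑ j ∈ Finset.range (k - i + 1),
          uR p k n ^ (i - 1 + j) * theta p k n (P j)
        = ∑ j ∈ Finset.range (k - i + 1), theta p k n (q j) * AVelt p k n g gg (i + j) := by
  let _ := Rn.commRing p k n
  have hmem : ∀ e < k, e + 1 ∈ Finset.Icc 1 k := fun e he => Finset.mem_Icc.mpr ⟨by omega, he⟩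
  obtain ⟨q, hq⟩ := exists_eq_sum_mul_of_vuSum_mem (theta p k n) C (uR p k n) (vR p k n) k
    (fun e => avCoeff k g gg (e + 1)) (fun e => AVelt p k n g gg (e + 1))
    (fun e he => AVelt_succ_eq_vuSum p k n g gg he) (fun e he => hAV (e + 1) (hmem e he))
    (fun e he y hy => (htor (e + 1) (hmem e he)).exists_theta_eq_mul (by simpa [torTorSet]) k)
    (e := i - 1) (m := k - i + 1) (by omega) hE
  refine ⟨q, hq.trans (Finset.sum_congr rfl fun j _ => ?_)⟩
  rw [show i - 1 + j + 1 = i + j by omega]
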